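/- arXiv:1902.05229 — 5 statements merged into one kernel-verified Lean document; each statement's English description precedes it below -/
import Mathlib

section
/- Let X be a compact Hausdorff topological space and let A be a norm-bounded subset of the Banach space C(X, ℝ) of continuous real-valued functions on X with the supremum norm. If A is relatively weakly compact in C(X, ℝ) (i.e., the closure of A in the weak topology of C(X, ℝ) is weakly compact), then A has RSC (every sequence in A has a subsequence that converges pointwise to some real-valued function on X) and A has SCP (the pointwise limit of every pointwise convergent sequence from A is a continuous function on X). -/
/-- A family `A` of continuous real-valued functions on `X` has RSC (relative
sequential compactness in `ℝ^X`) if every sequence in `A` has a subsequence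
converging pointwise to some real-valued function on `X`. -/
def HasRSC {X : Type*} [TopologicalSpace X] (A : Set C(X, ℝ)) : Prop :=
  ∀ u : ℕ → C(X, ℝ), (∀ n, u n ∈ A) →
    ∃ φ : ℕ → ℕ, StrictMono φ ∧ ∃ f : X → ℝ,
      ∀ x, Filter.Tendsto (fun k => u (φ k) x) Filter.atTop (nhds (f x))

/-- A family `A` of continuous real-valued functions on `X` has SCP (weak
sequential completeness property) if the pointwise limit of every pointwise
convergent sequence from `A` is continuous. -/
def HasSCP {X : Type*} [TopologicalSpace X] (A : Set C(X, ℝ)) : Prop :=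
  ∀ u : ℕ → C(X, ℝ), (∀ n, u n ∈ A) → ∀ f : X → ℝ,
    (∀ x, Filter.Tendsto (fun n => u n x) Filter.atTop (nhds (f x))) →
      Continuous f


open Filter Topology

section Helpers

variable {X : Type*} [TopologicalSpace X] [CompactSpace X]

set_option linter.unusedSectionVars false

private lemma weak_eval_continuous' (x : X) :
    Continuous fun w : WeakSpace ℝ C(X, ℝ) => ((toWeakSpace ℝ C(X, ℝ)).symm w) x :=
  WeakBilin.eval_continuous ((topDualPairing ℝ C(X, ℝ)).flip) (ContinuousMap.evalCLM ℝ x)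

private lemma mapClusterPt_eq_of_tendsto' {u : ℕ → ℝ} {a b : ℝ}
    (h : MapClusterPt a atTop u) (h' : Tendsto u atTop (𝓝 b)) : a = b :=
  eq_of_nhds_neBot (h.clusterPt.mono h')

private lemma cluster_lemma' [T2Space X] (A : Set C(X, ℝ))
    (hcpt : IsCompact (closure (toWeakSpace ℝ C(X, ℝ) '' A)))
    (v : ℕ → C(X, ℝ)) (hv : ∀ n, v n ∈ A) :
    ∃ g : C(X, ℝ),
      (∀ x : X, MapClusterPt (g x) atTop (fun n => v n x)) ∧
      toWeakSpace ℝ C(X, ℝ) g ∈ closure (Set.range fun n => toWeakSpace ℝ C(X, ℝ) (v n)) := by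
  set ι := toWeakSpace ℝ C(X, ℝ)
  have hle : map (fun n => ι (v n)) atTop ≤ 𝓟 (closure (ι '' A)) := by
    refine le_principal_iff.mpr ?_
    exact eventually_map.mpr (Eventually.of_forall fun n =>
      subset_closure ⟨v n, hv n, rfl⟩)
  obtain ⟨a, -, hcl⟩ := hcpt hle
  refine ⟨ι.symm a, fun x => ?_, ?_⟩
  · have h1 : MapClusterPt a atTop fun n => ι (v n) := hcl
    have := h1.continuousAt_comp (f := fun w => (ι.symm w) x)
      (weak_eval_continuous' x).continuousAt
    exact this
  · rw [ι.apply_symm_apply]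
    refine mem_closure_iff_clusterPt.mpr (hcl.mono ?_)
    exact le_principal_iff.mpr (mem_map.mpr (Eventually.of_forall fun n => ⟨n, rfl⟩))

private lemma closure_span_smul_mem' (s : Set C(X, ℝ)) (r : ℝ) {g : C(X, ℝ)}
    (hg : g ∈ closure (Submodule.span ℚ s : Set C(X, ℝ))) :
    r • g ∈ closure (Submodule.span ℚ s : Set C(X, ℝ)) := by
  set Q : Set C(X, ℝ) := (Submodule.span ℚ s : Set C(X, ℝ))
  have hQ : ∀ q ∈ Q, r • q ∈ closure Q := by
    intro q hq
    have hr : r ∈ closure (Set.range ((↑) : ℚ → ℝ)) :=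
      (Rat.denseRange_cast (𝕜 := ℝ)) r
    have hcont : Continuous fun t : ℝ => t • q := continuous_id.smul continuous_const
    have := (image_closure_subset_closure_image hcont) ⟨r, hr, rfl⟩
    refine closure_mono ?_ this
    rintro _ ⟨_, ⟨t, rfl⟩, rfl⟩
    show (t : ℝ) • q ∈ Q
    rw [Rat.cast_smul_eq_qsmul]
    exact Submodule.smul_mem _ t hq
  have hcont : Continuous fun x : C(X, ℝ) => r • x := continuous_const_smul r
  have := (image_closure_subset_closure_image hcont) ⟨g, hg, rfl⟩
  refine (closure_minimal ?_ isClosed_closure) this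
  rintro _ ⟨q, hq, rfl⟩
  exact hQ q hq

private lemma closure_span_add_mem' (s : Set C(X, ℝ)) {g h : C(X, ℝ)}
    (hg : g ∈ closure (Submodule.span ℚ s : Set C(X, ℝ)))
    (hh : h ∈ closure (Submodule.span ℚ s : Set C(X, ℝ))) :
    g + h ∈ closure (Submodule.span ℚ s : Set C(X, ℝ)) := by
  have := ((Submodule.span ℚ s).toAddSubgroup.topologicalClosure).add_mem
    (by exact hg) (by exact hh)
  exact this

private lemma closure_span_convex' (s : Set C(X, ℝ)) :
    Convex ℝ (closure (Submodule.span ℚ s : Set C(X, ℝ))) := by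
  intro g hg h hh a b _ _ _
  exact closure_span_add_mem' s (closure_span_smul_mem' s a hg) (closure_span_smul_mem' s b hh)

private lemma weak_image_closed' (C : Set C(X, ℝ)) (hC : IsClosed C) (hconv : Convex ℝ C) :
    IsClosed (toWeakSpace ℝ C(X, ℝ) '' C) := by
  have := hconv.toWeakSpace_closure (𝕜 := ℝ)
  rw [hC.closure_eq] at this
  rw [← closure_eq_iff_isClosed, ← this]

private lemma exists_near_norm' [Nonempty X] (q : C(X, ℝ)) {ε : ℝ} (hε : 0 < ε) :
    ∃ x, ‖q‖ - ε < |q x| := by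
  by_contra hcon
  push_neg at hcon
  rcases lt_or_ge (‖q‖ - ε) 0 with h | h
  · obtain ⟨x⟩ := ‹Nonempty X›
    exact absurd (hcon x) (not_le.mpr (lt_of_lt_of_le h (abs_nonneg _)))
  · have : ‖q‖ ≤ ‖q‖ - ε := (ContinuousMap.norm_le q h).mpr fun x => by
      simpa using hcon x
    linarith

end Helpers

theorem stmt0 {X : Type*} [TopologicalSpace X] [CompactSpace X] [T2Space X]
    (A : Set C(X, ℝ)) (hbdd : ∃ M : ℝ, ∀ f ∈ A, ‖f‖ ≤ M)
    (hcpt : IsCompact (closure (toWeakSpace ℝ C(X, ℝ) '' A))) :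
    HasRSC A ∧ HasSCP A := by
  constructor
  · -- HasRSC
    intro u hu
    by_cases hX : Nonempty X
    swap
    · exact ⟨id, strictMono_id, fun _ => 0, fun x => absurd ⟨x⟩ hX⟩
    obtain ⟨M, hM⟩ := hbdd
    have hmem : ∀ (n : ℕ) (x : X), u n x ∈ Set.Icc (-M) M := by
      intro n x
      have h1 : |u n x| ≤ M := le_trans ((u n).norm_coe_le_norm x) (hM _ (hu n))
      exact abs_le.mp h1
    set Q := Submodule.span ℚ (Set.range u) with hQdef
    have hcnt : Countable (Submodule.span ℚ (Set.range u)) := inferInstance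
    have hQc : (Q : Set C(X, ℝ)).Countable := Set.countable_coe_iff.mp hcnt
    have hQne : (Q : Set C(X, ℝ)).Nonempty := ⟨0, Submodule.zero_mem Q⟩
    obtain ⟨qe, hqe⟩ := hQc.exists_eq_range hQne
    have hptex : ∀ (q : C(X, ℝ)) (k : ℕ), ∃ x, ‖q‖ - 1 / ((k : ℝ) + 1) < |q x| :=
      fun q k => exists_near_norm' q (by positivity)
    choose pt hpt using hptex
    set e : ℕ → X := fun j => pt (qe (Nat.unpair j).1) (Nat.unpair j).2 with he
    have hnorm : ∀ (q : C(X, ℝ)) (ε : ℝ), (∀ k, |q (pt q k)| ≤ ε) → ‖q‖ ≤ ε := by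
      intro q ε hsm
      have h1 : ∀ k : ℕ, ‖q‖ ≤ ε + 1 / ((k : ℝ) + 1) := fun k => by
        have h2 := hpt q k; have h3 := hsm k; linarith
      have h2 : Tendsto (fun k : ℕ => ε + 1 / ((k : ℝ) + 1)) atTop (𝓝 (ε + 0)) :=
        tendsto_const_nhds.add tendsto_one_div_add_atTop_nhds_zero_nat
      rw [add_zero] at h2
      exact ge_of_tendsto' h2 h1
    -- diagonal extraction over the countable point set
    have hS : IsSeqCompact (Set.univ.pi fun _ : ℕ => Set.Icc (-M) M) :=
      (isCompact_univ_pi fun _ => isCompact_Icc).isSeqCompact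
    have hmem' : ∀ n, (fun j => u n (e j)) ∈ Set.univ.pi fun _ : ℕ => Set.Icc (-M) M :=
      fun n j _ => hmem n (e j)
    obtain ⟨l, -, φ, hφ, hφt⟩ := hS hmem'
    have hconv : ∀ j, Tendsto (fun k => u (φ k) (e j)) atTop (𝓝 (l j)) := by
      intro j
      exact tendsto_pi_nhds.mp hφt j
    obtain ⟨g, hgcl, hgmem⟩ := cluster_lemma' A hcpt (fun k => u (φ k)) (fun k => hu _)
    have hQclosed : IsClosed (toWeakSpace ℝ C(X, ℝ) '' closure (Q : Set C(X, ℝ))) :=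
      weak_image_closed' _ isClosed_closure (closure_span_convex' _)
    have hmemQ : ∀ w : ℕ → C(X, ℝ), (∀ n, w n ∈ (Q : Set C(X, ℝ))) →
        ∀ g : C(X, ℝ), toWeakSpace ℝ C(X, ℝ) g ∈
          closure (Set.range fun n => toWeakSpace ℝ C(X, ℝ) (w n)) →
        g ∈ closure (Q : Set C(X, ℝ)) := by
      intro w hw g hg
      have hsub : closure (Set.range fun n => toWeakSpace ℝ C(X, ℝ) (w n)) ⊆
          toWeakSpace ℝ C(X, ℝ) '' closure (Q : Set C(X, ℝ)) := by
        refine closure_minimal ?_ hQclosed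
        rintro _ ⟨n, rfl⟩
        exact ⟨w n, subset_closure (hw n), rfl⟩
      obtain ⟨g', hg', heq⟩ := hsub hg
      rwa [← (toWeakSpace ℝ C(X, ℝ)).injective heq]
    have huQ : ∀ k, u (φ k) ∈ (Q : Set C(X, ℝ)) := fun k => Submodule.subset_span ⟨φ k, rfl⟩
    have hgQ : g ∈ closure (Q : Set C(X, ℝ)) := hmemQ _ huQ g hgmem
    have hge : ∀ j, g (e j) = l j := fun j => mapClusterPt_eq_of_tendsto' (hgcl (e j)) (hconv j)
    refine ⟨φ, hφ, ⇑g, fun x => ?_⟩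
    by_contra hten
    rw [Metric.tendsto_atTop] at hten
    push_neg at hten
    obtain ⟨ε, hε, hfreq⟩ := hten
    obtain ⟨ψ, hψ, hψd⟩ := extraction_of_frequently_atTop (frequently_atTop.mpr hfreq)
    obtain ⟨c, -, ψ', hψ', hctend⟩ := (isCompact_Icc (a := -M) (b := M)).isSeqCompact
      (x := fun k => u (φ (ψ k)) x) (fun k => hmem _ x)
    have hcd : ε ≤ dist c (g x) := by
      have h1 : Tendsto (fun k => dist (u (φ (ψ (ψ' k))) x) (g x)) atTop
          (𝓝 (dist c (g x))) := hctend.dist tendsto_const_nhds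
      exact ge_of_tendsto' h1 fun k => hψd (ψ' k)
    obtain ⟨h, hhcl, hhmem⟩ := cluster_lemma' A hcpt (fun k => u (φ (ψ (ψ' k)))) (fun k => hu _)
    have hhQ : h ∈ closure (Q : Set C(X, ℝ)) := hmemQ _ (fun k => huQ _) h hhmem
    have hhx : h x = c := mapClusterPt_eq_of_tendsto' (hhcl x) hctend
    have hhe : ∀ j, h (e j) = l j := by
      intro j
      have h1 : Tendsto (fun k => u (φ (ψ (ψ' k))) (e j)) atTop (𝓝 (l j)) :=
        (hconv j).comp (hψ.comp hψ').tendsto_atTop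
      exact mapClusterPt_eq_of_tendsto' (hhcl (e j)) h1
    have hgh : g = h := by
      have key : ∀ δ : ℝ, 0 < δ → ‖g - h‖ ≤ 4 * δ := by
        intro δ hδ
        obtain ⟨q, hqQ, hq⟩ := Metric.mem_closure_iff.mp hgQ δ hδ
        obtain ⟨q', hq'Q, hq'⟩ := Metric.mem_closure_iff.mp hhQ δ hδ
        have hqg : ∀ y, |q y - g y| ≤ δ := by
          intro y
          have h1 : ‖(q - g) y‖ ≤ ‖q - g‖ := (q - g).norm_coe_le_norm y
          simp only [ContinuousMap.sub_apply, Real.norm_eq_abs] at h1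
          have h2 : ‖q - g‖ < δ := by
            rw [← dist_eq_norm, dist_comm]; exact hq
          linarith
        have hq'h : ∀ y, |h y - q' y| ≤ δ := by
          intro y
          have h1 : ‖(h - q') y‖ ≤ ‖h - q'‖ := (h - q').norm_coe_le_norm y
          simp only [ContinuousMap.sub_apply, Real.norm_eq_abs] at h1
          have h2 : ‖h - q'‖ < δ := by
            rw [← dist_eq_norm]; exact hq'
          linarith
        have hrQ : q - q' ∈ (Q : Set C(X, ℝ)) := Submodule.sub_mem Q hqQ hq'Q
        obtain ⟨m, hm⟩ : ∃ m, qe m = q - q' := by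
          have h1 : q - q' ∈ Set.range qe := hqe ▸ hrQ
          exact h1
        have hsmall : ∀ k, |(q - q') (pt (q - q') k)| ≤ 2 * δ := by
          intro k
          have hje : e (Nat.pair m k) = pt (q - q') k := by
            simp [he, Nat.unpair_pair, hm]
          set d := pt (q - q') k with hd
          have hghd : g d = h d := by
            rw [← hje, hge, hhe]
          have heq : (q - q') d = (q d - g d) + (h d - q' d) := by
            simp only [ContinuousMap.sub_apply]
            rw [hghd]; ring
          calc |(q - q') d| ≤ |q d - g d| + |h d - q' d| := by
                rw [heq]; exact abs_add_le _ _
            _ ≤ δ + δ := add_le_add (hqg d) (hq'h d)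
            _ = 2 * δ := by ring
        have hqq' : ‖q - q'‖ ≤ 2 * δ := hnorm (q - q') (2 * δ) hsmall
        have hdec : g - h = (g - q) + (q - q') + (q' - h) := by abel
        rw [hdec]
        have h3 : ‖g - q‖ < δ := by rwa [← dist_eq_norm]
        have h4 : ‖q' - h‖ < δ := by rw [← dist_eq_norm, dist_comm]; exact hq'
        calc ‖(g - q) + (q - q') + (q' - h)‖
            ≤ ‖g - q‖ + ‖q - q'‖ + ‖q' - h‖ := norm_add₃_le
          _ ≤ 4 * δ := by linarith
      have h0 : ‖g - h‖ ≤ 0 := by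
        by_contra hpos
        push_neg at hpos
        have h1 := key (‖g - h‖ / 8) (by positivity)
        linarith
      have h1 := le_antisymm h0 (norm_nonneg _)
      rwa [norm_eq_zero, sub_eq_zero] at h1
    have hgx : g x = c := by rw [hgh]; exact hhx
    rw [hgx, dist_self] at hcd
    linarith
  · -- HasSCP
    intro u hu f hf
    obtain ⟨g, hgcl, -⟩ := cluster_lemma' A hcpt u hu
    have h1 : f = ⇑g := funext fun x => (mapClusterPt_eq_of_tendsto' (hgcl x) (hf x)).symm
    rw [h1]; exact g.continuous
end

section
/- Let X be a topological space, let (f_n) be a sequence of continuous real-valued functions on X that is pointwise nondecreasing (f_n(x) ≤ f_{n+1}(x) for all n and all x ∈ X) and converges pointwise to a continuous function g : X → ℝ. Let (b_n) be a sequence in X that has a cluster point b in X, and let ε > 0. Then it is impossible that f_i(b_j) + ε < f_j(b_i) for all i < j. -/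
theorem stmt3 {X : Type*} [TopologicalSpace X]
    (f : ℕ → X → ℝ) (hf : ∀ n, Continuous (f n))
    (hmono : ∀ n x, f n x ≤ f (n + 1) x)
    (g : X → ℝ) (hg : Continuous g)
    (hlim : ∀ x, Filter.Tendsto (fun n => f n x) Filter.atTop (nhds (g x)))
    (b : ℕ → X) (b₀ : X) (hb : MapClusterPt b₀ Filter.atTop b)
    (ε : ℝ) (hε : 0 < ε) :
    ¬ ∀ i j : ℕ, i < j → f i (b j) + ε < f j (b i) := by
  intro H
  have hmono' : ∀ x, Monotone fun n => f n x := fun x =>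
    monotone_nat_of_le_succ fun n => hmono n x
  have hle : ∀ n x, f n x ≤ g x := fun n x =>
    ge_of_tendsto (hlim x) (Filter.eventually_atTop.2 ⟨n, fun m hm => hmono' x hm⟩)
  -- choose N with f N b₀ > g b₀ - ε/2
  have hN : ∃ N, g b₀ - ε / 2 < f N b₀ := by
    have : ∀ᶠ n in Filter.atTop, g b₀ - ε / 2 < f n b₀ :=
      (hlim b₀).eventually (eventually_gt_nhds (by linarith))
    exact this.exists
  obtain ⟨N, hNb⟩ := hN
  set U : Set X := {x | g b₀ - ε / 2 < f N x ∧ g x < g b₀ + ε / 4} with hU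
  have hUopen : IsOpen U :=
    (isOpen_lt continuous_const (hf N)).inter (isOpen_lt hg continuous_const)
  have hb₀U : b₀ ∈ U := ⟨hNb, by linarith⟩
  have hfreq : ∃ᶠ n in Filter.atTop, b n ∈ U :=
    mapClusterPt_iff_frequently.1 hb U (hUopen.mem_nhds hb₀U)
  obtain ⟨i, hiN, hiU⟩ :
      ∃ i, N ≤ i ∧ b i ∈ U :=
    ((Filter.eventually_ge_atTop N).and_frequently hfreq).exists
  obtain ⟨j, hji, hjU⟩ :
      ∃ j, i + 1 ≤ j ∧ b j ∈ U :=
    ((Filter.eventually_ge_atTop (i + 1)).and_frequently hfreq).exists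
  have h1 : f N (b j) ≤ f i (b j) := hmono' (b j) hiN
  have h2 : f j (b i) ≤ g (b i) := hle j (b i)
  have h3 := H i j hji
  have h4 : g b₀ - ε / 2 < f N (b j) := hjU.1
  have h5 : g (b i) < g b₀ + ε / 4 := hiU.2
  linarith
end

section
/- Let X be a compact topological space, let (f_n) be a sequence of continuous real-valued functions on X that is pointwise nondecreasing (f_n(x) ≤ f_{n+1}(x) for all n and all x ∈ X) and converges pointwise to a continuous function g : X → ℝ. Then for every ε > 0 there is no sequence (b_n) in X such that f_i(b_j) + ε < f_j(b_i) for all i < j. -/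
/-!
Let `x` be a cluster point of `b` (compactness) and pick `N` with `g x < f N x + ε` (no uniform
convergence is needed). By continuity, `g < f N + ε` holds across a neighbourhood of `x`, so for
late indices `N ≤ i < j` with `b i`, `b j` near `x`, monotonicity gives the contradiction
`g (b i) < f N (b j) + ε ≤ f i (b j) + ε < f j (b i) ≤ g (b i)`.
-/

open Filter Topology

theorem MapClusterPt.exists_lt_of_lt {X α : Type*} [TopologicalSpace X] [TopologicalSpace α]
    [LinearOrder α] [OrderClosedTopology α] [DenselyOrdered α] {b : ℕ → X} {x : X}
    (hx : MapClusterPt x atTop b) {φ ψ : X → α} (hφ : ContinuousAt φ x) (hψ : ContinuousAt ψ x)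
    (hlt : ψ x < φ x) (N : ℕ) : ∃ i j, N ≤ i ∧ i < j ∧ ψ (b i) < φ (b j) := by
  obtain ⟨m, hψm, hmφ⟩ := exists_between hlt
  have hnear : ∀ᶠ y in 𝓝 x, ψ y < m ∧ m < φ y :=
    (hψ.eventually_lt continuousAt_const hψm).and (continuousAt_const.eventually_lt hφ hmφ)
  obtain ⟨i, hNi, hi⟩ := frequently_atTop.1 (hx.frequently hnear) N
  obtain ⟨j, hij, hj⟩ := frequently_atTop.1 (hx.frequently hnear) (i + 1)
  exact ⟨i, j, hNi, hij, hi.1.trans hj.2⟩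

theorem stmt4 {X : Type*} [TopologicalSpace X] [CompactSpace X]
    (f : ℕ → X → ℝ) (hf : ∀ n, Continuous (f n))
    (hmono : ∀ n x, f n x ≤ f (n + 1) x)
    (g : X → ℝ) (hg : Continuous g)
    (hlim : ∀ x, Filter.Tendsto (fun n => f n x) Filter.atTop (nhds (g x)))
    (ε : ℝ) (hε : 0 < ε) :
    ¬ ∃ b : ℕ → X, ∀ i j : ℕ, i < j → f i (b j) + ε < f j (b i) := by
  rintro ⟨b, hb⟩
  have hmono_at (x : X) : Monotone (f · x) := monotone_nat_of_le_succ (hmono · x)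
  have hle (n : ℕ) (x : X) : f n x ≤ g x := (hmono_at x).ge_of_tendsto (hlim x) n
  obtain ⟨x, -, hx⟩ := isCompact_univ.exists_mapClusterPt (u := b) (f := atTop) (by simp)
  obtain ⟨N, hN⟩ : ∃ N, g x < f N x + ε :=
    ((hlim x).eventually (lt_mem_nhds (sub_lt_self _ hε))).exists.imp fun _ h => by linarith
  obtain ⟨i, j, hNi, hij, hgf⟩ :=
    hx.exists_lt_of_lt (φ := (f N · + ε)) (by fun_prop) hg.continuousAt hN N
  linarith [hb i j hij, hmono_at (b j) hNi, hle j (b i)]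
end

section
/- Let X be a compact topological space, let (f_n) be a sequence of continuous real-valued functions on X, and suppose some subsequence (f_{n_k}) converges pointwise on X to a continuous function ψ : X → ℝ. Let (x_m) be a sequence in X such that for each n the limit lim_m f_n(x_m) exists, for each m the limit lim_n f_n(x_m) exists, and both iterated limits L₁ = lim_n lim_m f_n(x_m) and L₂ = lim_m lim_n f_n(x_m) exist. Then L₁ = L₂. -/
open Filter Topology

private lemma mcp_eq_lim {Y : Type*} [TopologicalSpace Y] [T2Space Y] {u : ℕ → Y} {a b : Y}
    (hu : Tendsto u atTop (𝓝 a)) (hb : MapClusterPt b atTop u) : b = a := by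
  exact eq_of_nhds_neBot (Filter.NeBot.mono hb.clusterPt (inf_le_inf_left _ hu))

theorem stmt5 {X : Type*} [TopologicalSpace X] [CompactSpace X]
    (f : ℕ → X → ℝ) (hf : ∀ n, Continuous (f n))
    (φ : ℕ → ℕ) (hφ : StrictMono φ)
    (ψ : X → ℝ) (hψ : Continuous ψ)
    (hconv : ∀ x, Filter.Tendsto (fun k => f (φ k) x) Filter.atTop (nhds (ψ x)))
    (x : ℕ → X)
    (g : ℕ → ℝ) (hg : ∀ n, Filter.Tendsto (fun m => f n (x m)) Filter.atTop (nhds (g n)))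
    (h : ℕ → ℝ) (hh : ∀ m, Filter.Tendsto (fun n => f n (x m)) Filter.atTop (nhds (h m)))
    (L₁ L₂ : ℝ)
    (hL₁ : Filter.Tendsto g Filter.atTop (nhds L₁))
    (hL₂ : Filter.Tendsto h Filter.atTop (nhds L₂)) :
    L₁ = L₂ := by
  -- h m = ψ (x m)
  have hhψ : ∀ m, h m = ψ (x m) := fun m =>
    tendsto_nhds_unique ((hh m).comp hφ.tendsto_atTop) (hconv (x m))
  -- cluster point of (x m)
  obtain ⟨x₀, -, hx₀⟩ :=
    isCompact_univ.exists_mapClusterPt (u := x) (f := atTop) (by simp)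
  -- g n = f n x₀
  have hgn : ∀ n, g n = f n x₀ := fun n =>
    (mcp_eq_lim (hg n) (hx₀.continuousAt_comp (hf n).continuousAt)).symm
  -- L₁ = ψ x₀
  have hL₁' : L₁ = ψ x₀ := by
    have : Tendsto (fun n => f n x₀) atTop (𝓝 L₁) := by
      simpa [funext hgn] using hL₁
    exact tendsto_nhds_unique (this.comp hφ.tendsto_atTop) (hconv x₀)
  -- L₂ = ψ x₀
  have hL₂' : L₂ = ψ x₀ := by
    have hψx : Tendsto (fun m => ψ (x m)) atTop (𝓝 L₂) := by
      simpa [funext hhψ] using hL₂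
    exact (mcp_eq_lim hψx (hx₀.continuousAt_comp hψ.continuousAt)).symm
  rw [hL₁', hL₂']
end

section
/- In the Banach space c₀ of real sequences converging to 0 equipped with the supremum norm, let e_n denote the n-th standard unit vector (the sequence which is 1 in coordinate n and 0 elsewhere) and let s_n = e_0 + e_1 + ⋯ + e_n. Then for all natural numbers i < j one has ‖s_i + e_j‖ = 1 and ‖e_i + s_j‖ = 2. -/
open ZeroAtInfty Filter

/-- The `n`-th standard unit vector in `c₀`: the sequence which is `1` in
coordinate `n` and `0` elsewhere. -/
noncomputable def stdBasis (n : ℕ) : C₀(ℕ, ℝ) where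
  toFun := fun k => if k = n then (1 : ℝ) else 0
  continuous_toFun := continuous_of_discreteTopology
  zero_at_infty' := by
    refine Tendsto.congr' ?_ tendsto_const_nhds
    filter_upwards [mem_cocompact.mpr ⟨{n}, isCompact_singleton, subset_rfl⟩] with k hk
    simp only [Set.mem_compl_iff, Set.mem_singleton_iff] at hk
    simp [hk]

/-- `s n = e 0 + e 1 + ⋯ + e n` in `c₀`. -/
noncomputable def stdSum (n : ℕ) : C₀(ℕ, ℝ) :=
  ∑ i ∈ Finset.range (n + 1), stdBasis i

lemma stdBasis_apply (n k : ℕ) : stdBasis n k = if k = n then (1:ℝ) else 0 := rfl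
lemma stdSum_apply (n k : ℕ) : stdSum n k = if k ≤ n then (1:ℝ) else 0 := by
  induction n with
  | zero => simp [stdSum, stdBasis_apply, Nat.le_zero]
  | succ n ih =>
    have : stdSum (n+1) = stdSum n + stdBasis (n+1) := by
      simp [stdSum, Finset.sum_range_succ]
    rw [this, ZeroAtInftyContinuousMap.coe_add]
    simp only [Pi.add_apply, ih, stdBasis_apply]
    rcases lt_trichotomy k (n+1) with h | h | h
    · simp [Nat.lt_succ_iff.mp h, h.le, Nat.ne_of_lt h]
    · simp [h, Nat.not_succ_le_self]
    · simp [Nat.not_le.mpr h, Nat.not_le.mpr (Nat.lt_of_succ_lt h), Nat.ne_of_gt h]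
lemma norm_eq_of (f : C₀(ℕ, ℝ)) (c : ℝ) (hc : 0 ≤ c) (hle : ∀ k, |f k| ≤ c)
    (k : ℕ) (hk : f k = c) : ‖f‖ = c := by
  rw [← ZeroAtInftyContinuousMap.norm_toBCF_eq_norm]
  apply le_antisymm
  · exact BoundedContinuousFunction.norm_le hc |>.mpr (fun x => by simpa using hle x)
  · calc c = |f k| := by rw [hk, abs_of_nonneg hc]
    _ ≤ ‖(ZeroAtInftyContinuousMap.toBCF f)‖ := by
        simpa using BoundedContinuousFunction.norm_coe_le_norm f.toBCF k

theorem stmt7 (i j : ℕ) (hij : i < j) :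
    ‖stdSum i + stdBasis j‖ = 1 ∧ ‖stdBasis i + stdSum j‖ = 2 := by
  constructor
  · refine norm_eq_of _ 1 one_pos.le (fun k => ?_) 0 ?_
    · rw [ZeroAtInftyContinuousMap.coe_add, Pi.add_apply, stdSum_apply, stdBasis_apply]
      rcases le_or_gt k i with h | h
      · simp [h, Nat.ne_of_lt (h.trans_lt hij)]
      · simp only [Nat.not_le.mpr h, if_false]
        split <;> simp
    · rw [ZeroAtInftyContinuousMap.coe_add, Pi.add_apply, stdSum_apply, stdBasis_apply]
      have : (0:ℕ) ≠ j := Nat.ne_of_lt (Nat.lt_of_le_of_lt (Nat.zero_le i) hij)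
      simp [this]
  · refine norm_eq_of _ 2 (by norm_num) (fun k => ?_) i ?_
    · rw [ZeroAtInftyContinuousMap.coe_add, Pi.add_apply, stdSum_apply, stdBasis_apply]
      split <;> split <;> norm_num
    · rw [ZeroAtInftyContinuousMap.coe_add, Pi.add_apply, stdSum_apply, stdBasis_apply]
      rw [if_pos rfl, if_pos hij.le]; norm_num
end
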